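/- arXiv:1712.00790 — 3 statements merged into one kernel-verified Lean document; each statement's English description precedes it below -/
import Mathlib

section
/- Let α > 1 and β > 0 be real numbers and let a ≥ 0. Then the supremum over real Δ > 0 of the ratio (∫_a^{a+Δ} (α/β)(1 + t/β)^{−α−1} dt) / (∫_a^{a+Δ} (1 + t/β)^{−α} dt) equals α/(β + a). -/
open intervalIntegral Set Filter Topology

private lemma pareto_ratio_bounds (α β a Δ : ℝ) (hα : 1 < α) (hβ : 0 < β) (ha : 0 ≤ a)
    (hΔ : 0 < Δ) :
    α / (β + a + Δ) ≤ (∫ t in a..(a + Δ), (α / β) * (1 + t / β) ^ (-α - 1)) /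
          (∫ t in a..(a + Δ), (1 + t / β) ^ (-α)) ∧
    (∫ t in a..(a + Δ), (α / β) * (1 + t / β) ^ (-α - 1)) /
          (∫ t in a..(a + Δ), (1 + t / β) ^ (-α)) ≤ α / (β + a) := by
  have hab : a ≤ a + Δ := by linarith
  have hbase : ∀ t ∈ Icc a (a + Δ), (0:ℝ) < 1 + t / β := by
    intro t ht
    have : 0 ≤ t := le_trans ha ht.1
    positivity
  -- tail function continuity / integrability
  have hcont : ContinuousOn (fun t : ℝ => (1 + t / β) ^ (-α)) (Icc a (a + Δ)) := by
    apply ContinuousOn.rpow_const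
    · fun_prop
    · intro t ht; exact Or.inl (ne_of_gt (hbase t ht))
  have hintD : IntervalIntegrable (fun t : ℝ => (1 + t / β) ^ (-α)) MeasureTheory.volume a (a + Δ) := by
    apply ContinuousOn.intervalIntegrable
    rwa [uIcc_of_le hab]
  -- positivity of denominator
  have hD : 0 < ∫ t in a..(a + Δ), (1 + t / β) ^ (-α) := by
    apply intervalIntegral_pos_of_pos_on hintD _ (by linarith)
    intro t ht
    exact Real.rpow_pos_of_pos (hbase t ⟨le_of_lt ht.1, le_of_lt ht.2⟩) _
  -- rewrite numerator integrand
  have key : ∀ t ∈ Icc a (a + Δ),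
      (α / β) * (1 + t / β) ^ (-α - 1) = (α / (β + t)) * (1 + t / β) ^ (-α) := by
    intro t ht
    have h1 : (0:ℝ) < 1 + t / β := hbase t ht
    have h2 : (0:ℝ) < β + t := by have := le_trans ha ht.1; positivity
    have : (1 + t / β) ^ (-α - 1) = (1 + t / β) ^ (-α) * (1 + t / β)⁻¹ := by
      rw [show -α - 1 = -α + (-1) by ring, Real.rpow_add h1, Real.rpow_neg_one]
    rw [this]
    have h3 : (1 + t / β)⁻¹ = β / (β + t) := by
      rw [show 1 + t / β = (β + t) / β by field_simp]
      rw [inv_div]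
    rw [h3]
    field_simp
  have hcontN : ContinuousOn (fun t : ℝ => (α / β) * (1 + t / β) ^ (-α - 1)) (Icc a (a + Δ)) := by
    apply ContinuousOn.mul continuousOn_const
    apply ContinuousOn.rpow_const
    · fun_prop
    · intro t ht; exact Or.inl (ne_of_gt (hbase t ht))
  have hintN : IntervalIntegrable (fun t : ℝ => (α / β) * (1 + t / β) ^ (-α - 1))
      MeasureTheory.volume a (a + Δ) := by
    apply ContinuousOn.intervalIntegrable
    rwa [uIcc_of_le hab]
  have hintDl : IntervalIntegrable (fun t : ℝ => (α / (β + a + Δ)) * (1 + t / β) ^ (-α))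
      MeasureTheory.volume a (a + Δ) := hintD.const_mul _
  have hintDu : IntervalIntegrable (fun t : ℝ => (α / (β + a)) * (1 + t / β) ^ (-α))
      MeasureTheory.volume a (a + Δ) := hintD.const_mul _
  have hα0 : (0:ℝ) < α := by linarith
  -- upper bound on numerator
  have hNu : (∫ t in a..(a + Δ), (α / β) * (1 + t / β) ^ (-α - 1)) ≤
      (α / (β + a)) * ∫ t in a..(a + Δ), (1 + t / β) ^ (-α) := by
    rw [← intervalIntegral.integral_const_mul]
    apply integral_mono_on hab hintN hintDu
    intro t ht
    rw [key t ht]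
    apply mul_le_mul_of_nonneg_right _ (le_of_lt (Real.rpow_pos_of_pos (hbase t ht) _))
    apply div_le_div_of_nonneg_left (le_of_lt hα0) (by positivity) (by linarith [ht.1])
  have hNl : (α / (β + a + Δ)) * (∫ t in a..(a + Δ), (1 + t / β) ^ (-α)) ≤
      ∫ t in a..(a + Δ), (α / β) * (1 + t / β) ^ (-α - 1) := by
    rw [← intervalIntegral.integral_const_mul]
    apply integral_mono_on hab hintDl hintN
    intro t ht
    rw [key t ht]
    apply mul_le_mul_of_nonneg_right _ (le_of_lt (Real.rpow_pos_of_pos (hbase t ht) _))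
    apply div_le_div_of_nonneg_left (le_of_lt hα0) (by have := le_trans ha ht.1; positivity)
      (by linarith [ht.2])
  constructor
  · rw [le_div_iff₀ hD]; exact hNl
  · rw [div_le_iff₀ hD]; exact hNu

/-- For a Pareto job size with tail `(1 + t/β)^(-α)` and density `(α/β)(1 + t/β)^(-α-1)`
(`α > 1`, `β > 0`), the Gittins index at age `a ≥ 0`, i.e. the supremum over `Δ > 0` of
`(∫_a^{a+Δ} f(t) dt) / (∫_a^{a+Δ} (1 + t/β)^(-α) dt)`, equals `α/(β + a)`. -/
theorem gittins_index_pareto (α β a : ℝ) (hα : 1 < α) (hβ : 0 < β) (ha : 0 ≤ a) :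
    sSup {g : ℝ | ∃ Δ : ℝ, 0 < Δ ∧
      g = (∫ t in a..(a + Δ), (α / β) * (1 + t / β) ^ (-α - 1)) /
          (∫ t in a..(a + Δ), (1 + t / β) ^ (-α))}
    = α / (β + a) := by
  set S := {g : ℝ | ∃ Δ : ℝ, 0 < Δ ∧
      g = (∫ t in a..(a + Δ), (α / β) * (1 + t / β) ^ (-α - 1)) /
          (∫ t in a..(a + Δ), (1 + t / β) ^ (-α))} with hS
  have hub : ∀ g ∈ S, g ≤ α / (β + a) := by
    rintro g ⟨Δ, hΔ, rfl⟩
    exact (pareto_ratio_bounds α β a Δ hα hβ ha hΔ).2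
  have hne : S.Nonempty := ⟨_, 1, one_pos, rfl⟩
  have hbdd : BddAbove S := ⟨_, hub⟩
  apply le_antisymm (csSup_le hne hub)
  -- lower bound: approach via small Δ
  apply le_of_forall_lt
  intro c hc
  have htend : Tendsto (fun Δ : ℝ => α / (β + a + Δ)) (𝓝[>] 0) (𝓝 (α / (β + a))) := by
    apply Filter.Tendsto.mono_left _ nhdsWithin_le_nhds
    have hc0 : ContinuousAt (fun Δ : ℝ => α / (β + a + Δ)) 0 := by
      apply ContinuousAt.div continuousAt_const (by fun_prop)
      simp only [add_zero]
      positivity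
    simpa using hc0.tendsto
  have hev : ∀ᶠ Δ in 𝓝[>] (0:ℝ), c < α / (β + a + Δ) := htend.eventually (eventually_gt_nhds hc)
  obtain ⟨Δ, hΔc, hΔpos⟩ := (hev.and self_mem_nhdsWithin).exists
  calc c < α / (β + a + Δ) := hΔc
    _ ≤ _ := (pareto_ratio_bounds α β a Δ hα hβ ha hΔpos).1
    _ ≤ sSup S := le_csSup hbdd ⟨Δ, hΔpos, rfl⟩
end

section
/- Let x > 0 be a real number that is not an integer, and let a be real with 0 ≤ a ≤ ⌊x⌋. Then, with respect to the lexicographic order on ℝ × ℝ, the pair (0, ⌊x⌋) is the greatest element of the set { (⌊b⌋ − b, b) : b ∈ [a, x) }, i.e., IsGreatest { toLex (⌊b⌋ − b, b) | a ≤ b < x } (toLex (0, ⌊x⌋)). -/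
open Set

/-- Worst future rank under discretized FB, before the last checkpoint: for a job of
non-integer size `x` at age `a` with `0 ≤ a ≤ ⌊x⌋`, the greatest element (in the
lexicographic order on `ℝ × ℝ`) of the set of ranks `⟨⌊b⌋ - b, b⟩` over ages
`b ∈ [a, x)` is `⟨0, ⌊x⌋⟩`. -/
theorem discretized_fb_worst_rank_before_checkpoint (x a : ℝ) (hx : 0 < x)
    (hxnotint : ¬∃ n : ℤ, x = n) (ha : 0 ≤ a) (hax : a ≤ (⌊x⌋ : ℝ)) :
    IsGreatest {p : Lex (ℝ × ℝ) | ∃ b : ℝ, a ≤ b ∧ b < x ∧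
        p = toLex ((⌊b⌋ : ℝ) - b, b)}
      (toLex ((0 : ℝ), ((⌊x⌋ : ℤ) : ℝ))) := by
  constructor
  · refine ⟨(⌊x⌋ : ℝ), hax, ?_, ?_⟩
    · rcases lt_or_eq_of_le (Int.floor_le x) with h | h
      · exact h
      · exact absurd ⟨⌊x⌋, h.symm⟩ hxnotint
    · simp
  · rintro p ⟨b, hab, hbx, rfl⟩
    rw [Prod.Lex.le_iff]
    rcases lt_or_eq_of_le (sub_nonpos.mpr (Int.floor_le b)) with h | h
    · exact Or.inl h
    · refine Or.inr ⟨h, ?_⟩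
      show b ≤ (⌊x⌋ : ℝ)
      have hb : b = (⌊b⌋ : ℝ) := by linarith [sub_eq_zero.mp h]
      rw [hb]
      exact_mod_cast Int.floor_le_floor hbx.le
end

section
/- Let x > 0 be real and let a be real with ⌊x⌋ < a < x. Then, with respect to the lexicographic order on ℝ × ℝ, the pair (⌊x⌋ − a, a) is the greatest element of the set { (⌊b⌋ − b, b) : b ∈ [a, x) }, i.e., IsGreatest { toLex (⌊b⌋ − b, b) | a ≤ b < x } (toLex (⌊x⌋ − a, a)). -/
open Set

/-- Worst future rank under discretized FB, past the last checkpoint: for a job of size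
`x` at age `a` with `⌊x⌋ < a < x`, the greatest element (in the lexicographic order on
`ℝ × ℝ`) of the set of ranks `⟨⌊b⌋ - b, b⟩` over ages `b ∈ [a, x)` is `⟨⌊x⌋ - a, a⟩`. -/
theorem discretized_fb_worst_rank_past_checkpoint (x a : ℝ) (hx : 0 < x)
    (ha : (⌊x⌋ : ℝ) < a) (hax : a < x) :
    IsGreatest {p : Lex (ℝ × ℝ) | ∃ b : ℝ, a ≤ b ∧ b < x ∧
        p = toLex ((⌊b⌋ : ℝ) - b, b)}
      (toLex ((⌊x⌋ : ℝ) - a, a)) := by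
  have hfloor : ∀ b : ℝ, a ≤ b → b < x → ⌊b⌋ = ⌊x⌋ := by
    intro b hab hbx
    rw [Int.floor_eq_iff]
    constructor
    · exact le_of_lt (lt_of_lt_of_le ha hab)
    · exact lt_trans hbx (by push_cast; exact Int.lt_floor_add_one x)
  constructor
  · exact ⟨a, le_refl a, hax, by rw [hfloor a (le_refl a) hax]⟩
  · rintro p ⟨b, hab, hbx, rfl⟩
    rw [hfloor b hab hbx]
    rcases eq_or_lt_of_le hab with h | h
    · subst h; exact le_refl _
    · exact le_of_lt (Prod.Lex.left _ _ (by linarith))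
end
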